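/- Let P be a profile of n votes on A, let a ∈ A, let k ≥ 1 be an integer, and let P^k denote the profile of kn votes in which each vote of P is repeated k times. Then Sc_D[P^k](a) ≤ k·Sc_D[P](a), and k·Sc_D[P](a) < Sc_D[P^k](a) + k·(m − 1)!·(m − 1)·e, where e denotes Euler's number. (Equivalently, the k-Dodgson score Sc_D^k(a) = Sc_D[P^k](a)/k satisfies Sc_D[P](a) − (m − 1)!(m − 1)e < Sc_D^k(a) ≤ Sc_D[P](a).) -/

import Mathlib

open Finset Filter

/-- A vote (strict linear order) on `m` alternatives, encoded by its position map:
`v x` is the position of alternative `x`, position `0` being the top.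
`v` ranks `x` above `y` iff `v x < v y`. -/
abbrev Vote (m : ℕ) := Equiv.Perm (Fin m)

/-- A profile is a list of `n` votes, one per agent. -/
abbrev Profile (m n : ℕ) := Fin n → Vote m

/-- `n_{xy}[P]`: the number of votes in `P` ranking `x` above `y`. -/
def nAbove {m n : ℕ} (P : Profile m n) (x y : Fin m) : ℕ :=
  (Finset.univ.filter (fun i => P i x < P i y)).card

/-- `adv[P](x,y) = max (0, n_{xy} - n_{yx})` (truncated subtraction on `ℕ`). -/
def adv {m n : ℕ} (P : Profile m n) (x y : Fin m) : ℕ :=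
  nAbove P x y - nAbove P y x

/-- The Tideman score `Sc_T[P](a) = Σ_{b ≠ a} adv[P](b,a)`. -/
def ScT {m n : ℕ} (P : Profile m n) (a : Fin m) : ℕ :=
  ∑ b ∈ Finset.univ.filter (fun b => b ≠ a), adv P b a

/-- The Dodgson Quick score `Sc_Q[P](a) = Σ_{b ≠ a} ⌈adv[P](b,a)/2⌉`. -/
def ScQ {m n : ℕ} (P : Profile m n) (a : Fin m) : ℕ :=
  ∑ b ∈ Finset.univ.filter (fun b => b ≠ a), (adv P b a + 1) / 2

/-- `a` is a Condorcet-tie winner of `P` iff `adv[P](b,a) = 0` for all `b ≠ a`. -/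
def CondorcetTieWinner {m n : ℕ} (P : Profile m n) (a : Fin m) : Prop :=
  ∀ b, b ≠ a → adv P b a = 0

/-- `a` is a Condorcet winner of `P` iff `adv[P](a,b) > 0` for all `b ≠ a`. -/
def CondorcetWinner {m n : ℕ} (P : Profile m n) (a : Fin m) : Prop :=
  ∀ b, b ≠ a → 0 < adv P a b

/-- `w` is obtained from the vote `v` by one swap of neighbouring alternatives
(the alternatives at consecutive positions `p` and `p+1` are exchanged). -/
def AdjSwapVote {m : ℕ} (v w : Vote m) : Prop :=
  ∃ p q : Fin m, (q : ℕ) = (p : ℕ) + 1 ∧ w = v.trans (Equiv.swap p q)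

/-- `Q` is obtained from the profile `P` by one adjacent swap in one vote. -/
def AdjSwap {m n : ℕ} (P Q : Profile m n) : Prop :=
  ∃ i : Fin n, AdjSwapVote (P i) (Q i) ∧ ∀ j, j ≠ i → Q j = P j

/-- `Reach r k P Q`: `Q` can be obtained from `P` by exactly `k` steps of `r`. -/
def Reach {α : Type*} (r : α → α → Prop) : ℕ → α → α → Prop
  | 0, P, Q => P = Q
  | (k+1), P, Q => ∃ R, r P R ∧ Reach r k R Q

/-- The Dodgson score `Sc_D[P](a)`: the minimum number of adjacent swaps needed to
transform `P` into a profile in which `a` is a Condorcet-tie winner. -/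
noncomputable def ScD {m n : ℕ} (P : Profile m n) (a : Fin m) : ℕ :=
  sInf {k | ∃ Q, Reach AdjSwap k P Q ∧ CondorcetTieWinner Q a}

/-- Variant of the Dodgson score requiring `a` to become a Condorcet winner. -/
noncomputable def ScD' {m n : ℕ} (P : Profile m n) (a : Fin m) : ℕ :=
  sInf {k | ∃ Q, Reach AdjSwap k P Q ∧ CondorcetWinner Q a}

/- Voting situations: multisets of votes.  Scores depend only on the voting
situation of a profile, so we define them directly on multisets. -/

/-- Number of votes in the voting situation `S` ranking `x` above `y`. -/
def snAbove {m : ℕ} (S : Multiset (Vote m)) (x y : Fin m) : ℕ :=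
  (S.filter (fun v => v x < v y)).card

def sadv {m : ℕ} (S : Multiset (Vote m)) (x y : Fin m) : ℕ :=
  snAbove S x y - snAbove S y x

/-- Tideman score of a voting situation. -/
def sScT {m : ℕ} (S : Multiset (Vote m)) (a : Fin m) : ℕ :=
  ∑ b ∈ Finset.univ.filter (fun b => b ≠ a), sadv S b a

/-- Dodgson Quick score of a voting situation. -/
def sScQ {m : ℕ} (S : Multiset (Vote m)) (a : Fin m) : ℕ :=
  ∑ b ∈ Finset.univ.filter (fun b => b ≠ a), (sadv S b a + 1) / 2

def sCondorcetTieWinner {m : ℕ} (S : Multiset (Vote m)) (a : Fin m) : Prop :=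
  ∀ b, b ≠ a → sadv S b a = 0

/-- One adjacent swap applied to one vote of a voting situation. -/
def sAdjSwap {m : ℕ} (S T : Multiset (Vote m)) : Prop :=
  ∃ v ∈ S, ∃ w, AdjSwapVote v w ∧ T = w ::ₘ S.erase v

/-- Dodgson score of a voting situation. -/
noncomputable def sScD {m : ℕ} (S : Multiset (Vote m)) (a : Fin m) : ℕ :=
  sInf {k | ∃ T, Reach sAdjSwap k S T ∧ sCondorcetTieWinner T a}

/-- `a` is a Tideman winner (minimal Tideman score). -/
def sTWinner {m : ℕ} (S : Multiset (Vote m)) (a : Fin m) : Prop :=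
  ∀ b, sScT S a ≤ sScT S b

/-- `a` is a DQ winner (minimal DQ score). -/
def sQWinner {m : ℕ} (S : Multiset (Vote m)) (a : Fin m) : Prop :=
  ∀ b, sScQ S a ≤ sScQ S b

/-- `a` is a Dodgson winner (minimal Dodgson score). -/
def sDWinner {m : ℕ} (S : Multiset (Vote m)) (a : Fin m) : Prop :=
  ∀ b, sScD S a ≤ sScD S b


/-!
Raising `a` by `t i` positions in each vote `i` takes `∑ t i` swaps, and a swap sequence that
makes `a` a Condorcet-tie winner is at least as long as some raise doing the same, since it must
carry `a` past everything that ends up below it. So `Sc_D[P](a)` is the least `∑ t i` over raises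
under which `a` overtakes each rival `b` often enough, a condition that scales with the profile.
Copying an optimal raise of `P` to all clones gives `Sc_D[P^k](a) ≤ k·Sc_D[P](a)`.

Conversely, votes in which the same alternatives sit at the same distances above `a` respond
identically to raises. On such a class of `c` votes, the `k·c` raises of an optimal solution for
`P^k` can be rounded to `c` raises which, counted `k` times, overtake every rival at least as
often and cost at most `k·(m-1)` more. A class is determined by the position `j < m` of `a` and
the ordered list of the `j` alternatives above it, so there are at most
`∑ j, (m-1)!/(m-1-j)! < (m-1)!·e` classes.
-/

section Swaps

variable {m n : ℕ}

def kendallTau (v w : Vote m) : ℕ :=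
  #{x : Fin m × Fin m | v x.1 < v x.2 ∧ w x.2 < w x.1}

lemma kendallTau_self (w : Vote m) : kendallTau w w = 0 := by
  simp only [kendallTau, card_eq_zero, filter_eq_empty_iff]
  exact fun x _ h => h.1.not_gt h.2

lemma swap_lt_swap_iff {p q r s : Fin m} (hq : (q : ℕ) = p + 1)
    (h₁ : ¬(r = p ∧ s = q)) (h₂ : ¬(r = q ∧ s = p)) :
    Equiv.swap p q r < Equiv.swap p q s ↔ r < s := by
  simp only [Fin.ext_iff, not_and] at h₁ h₂
  simp only [Equiv.swap_apply_def, Fin.lt_def]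
  split_ifs <;> simp_all [Fin.ext_iff] <;> omega

/-- An adjacent swap reverses a single pair of alternatives. -/
lemma kendallTau_le_of_adjSwapVote {v v' : Vote m} (h : AdjSwapVote v v') (w : Vote m) :
    kendallTau v w ≤ kendallTau v' w + 1 := by
  obtain ⟨p, q, hq, rfl⟩ := h
  unfold kendallTau
  refine (card_le_card ?_).trans (card_insert_le (v.symm p, v.symm q) _)
  intro x hx
  simp only [mem_filter, mem_univ, true_and, mem_insert, Equiv.trans_apply] at hx ⊢
  by_cases hx₀ : x = (v.symm p, v.symm q)
  · exact Or.inl hx₀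
  refine Or.inr (mem_filter.2 ⟨mem_univ x, (swap_lt_swap_iff hq ?_ ?_).2 hx.1, hx.2⟩)
  · rintro ⟨e₁, e₂⟩
    exact hx₀ (Prod.ext (by simp [← e₁]) (by simp [← e₂]))
  · rintro ⟨e₁, e₂⟩
    have := hx.1
    rw [e₁, e₂, Fin.lt_def] at this
    omega

lemma sum_kendallTau_le_of_reach {ℓ : ℕ} {P Q : Profile m n} (h : Reach AdjSwap ℓ P Q) :
    ∑ i, kendallTau (P i) (Q i) ≤ ℓ := by
  induction ℓ generalizing P with
  | zero => cases h; simp [kendallTau_self]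
  | succ ℓ ih =>
    obtain ⟨R, ⟨i, hi, hR⟩, hRQ⟩ := h
    have hstep : ∀ j,
        kendallTau (P j) (Q j) ≤ kendallTau (R j) (Q j) + if j = i then 1 else 0 := by
      intro j
      by_cases hj : j = i
      · subst hj; simpa using kendallTau_le_of_adjSwapVote hi (Q j)
      · simp [hR j hj, hj]
    calc ∑ j, kendallTau (P j) (Q j)
        ≤ ∑ j, (kendallTau (R j) (Q j) + if j = i then 1 else 0) :=
          sum_le_sum fun j _ => hstep j
      _ ≤ ℓ + 1 := by rw [sum_add_distrib]; simpa using ih hRQ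

/-- Every alternative at a position in `[v c, v a)` of `v` forms an inversion with `a` or with
`c`. -/
lemma sub_le_kendallTau {v w : Vote m} {a c : Fin m} (hv : v c < v a) (hw : w a < w c) :
    (v a : ℕ) - v c ≤ kendallTau v w := by
  rw [← Fin.card_Ico]
  refine card_le_card_of_injOn
    (fun p => if w a < w (v.symm p) then (v.symm p, a) else (c, v.symm p)) ?_ ?_
  · intro p hp
    simp only [coe_Ico, Set.mem_Ico] at hp
    have hpa : v.symm p ≠ a := by rintro rfl; simp at hp
    dsimp only
    split_ifs with h
    · simpa [kendallTau] using ⟨hp.2, h⟩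
    · have hpc : v.symm p ≠ c := by rintro rfl; exact h hw
      have hcp : v c < p := lt_of_le_of_ne hp.1 (by rintro rfl; simp at hpc)
      have : w (v.symm p) < w a :=
        lt_of_le_of_ne (not_lt.1 h) fun e => hpa (w.injective e)
      simpa [kendallTau] using ⟨hcp, this.trans hw⟩
  · intro p hp p' hp' h
    simp only [coe_Ico, Set.mem_Ico] at hp hp'
    have hpa : v.symm p ≠ a := by rintro rfl; simp at hp
    have hpa' : v.symm p' ≠ a := by rintro rfl; simp at hp'
    dsimp only at h
    split_ifs at h <;> simp_all [Prod.ext_iff]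

lemma Reach.trans {α : Type*} {r : α → α → Prop} {k l : ℕ} {x y z : α}
    (hxy : Reach r k x y) (hyz : Reach r l y z) : Reach r (k + l) x z := by
  induction k generalizing x with
  | zero => cases hxy; simpa using hyz
  | succ k ih =>
    obtain ⟨w, hxw, hwy⟩ := hxy
    rw [Nat.add_right_comm]
    exact ⟨w, hxw, ih hwy⟩

lemma Reach.map {α β : Type*} {r : α → α → Prop} {s : β → β → Prop} (f : α → β)
    (hf : ∀ x y, r x y → s (f x) (f y)) {k : ℕ} {x y : α} (h : Reach r k x y) :
    Reach s k (f x) (f y) := by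
  induction k generalizing x with
  | zero => cases h; rfl
  | succ k ih =>
    obtain ⟨w, hxw, hwy⟩ := h
    exact ⟨f w, hf x w hxw, ih hwy⟩

lemma adjSwap_update {P : Profile m n} {i : Fin n} {v w : Vote m} (h : AdjSwapVote v w) :
    AdjSwap (Function.update P i v) (Function.update P i w) :=
  ⟨i, by simpa using h, fun j hj => by simp [hj]⟩

lemma reach_adjSwap_of_forall {P Q : Profile m n} {t : Fin n → ℕ}
    (h : ∀ i, Reach AdjSwapVote (t i) (P i) (Q i)) : Reach AdjSwap (∑ i, t i) P Q := by
  classical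
  suffices ∀ s : Finset (Fin n),
      Reach AdjSwap (∑ i ∈ s, t i) P (fun i => if i ∈ s then Q i else P i) by
    simpa using this univ
  intro s
  induction s using Finset.induction_on with
  | empty => exact rfl
  | insert j s hj ih =>
    rw [sum_insert hj, add_comm]
    refine ih.trans ?_
    have := (h j).map (Function.update (fun i => if i ∈ s then Q i else P i) j)
      fun _ _ => adjSwap_update
    convert this using 1 <;> ext i <;> by_cases hij : i = j <;> simp_all

end Swaps

section Raise

variable {m n : ℕ}

def raiseStep (a : Fin m) (v : Vote m) : Vote m :=
  if h : 0 < (v a : ℕ) then v.trans (Equiv.swap ⟨v a - 1, by omega⟩ (v a)) else v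

def raiseBy (a : Fin m) (t : ℕ) (v : Vote m) : Vote m := (raiseStep a)^[t] v

lemma raiseStep_apply_self {a : Fin m} {v : Vote m} (h : 0 < (v a : ℕ)) :
    (raiseStep a v a : ℕ) = v a - 1 := by
  simp [raiseStep, h]

lemma raiseStep_apply_of_ne {a b : Fin m} {v : Vote m} (h : 0 < (v a : ℕ)) (hb : b ≠ a) :
    (raiseStep a v b : ℕ) = if (v b : ℕ) = v a - 1 then v a else v b := by
  have hba : (v b : ℕ) ≠ v a := fun e => hb (v.injective (Fin.ext e))
  simp only [raiseStep, dif_pos h, Equiv.trans_apply, Equiv.swap_apply_def]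
  split_ifs <;> simp_all [Fin.ext_iff]

lemma adjSwapVote_raiseStep {a : Fin m} {v : Vote m} (h : 0 < (v a : ℕ)) :
    AdjSwapVote v (raiseStep a v) :=
  ⟨⟨v a - 1, by omega⟩, v a, by simp only; omega, by simp [raiseStep, h]⟩

lemma raiseBy_lt_raiseBy_iff {a b : Fin m} (hb : b ≠ a) {t : ℕ} {v : Vote m}
    (ht : t ≤ (v a : ℕ)) : raiseBy a t v b < raiseBy a t v a ↔ (v b : ℕ) + t < v a := by
  induction t generalizing v with
  | zero => simp only [raiseBy, Function.iterate_zero, id_eq, add_zero, Fin.lt_def]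
  | succ t ih =>
    have h : 0 < (v a : ℕ) := by omega
    have hba : (v b : ℕ) ≠ v a := fun e => hb (v.injective (Fin.ext e))
    have hstep := raiseStep_apply_of_ne h hb
    rw [raiseBy, Function.iterate_succ_apply, ← raiseBy,
      ih (by rw [raiseStep_apply_self h]; omega), raiseStep_apply_self h, hstep]
    split_ifs <;> omega

lemma reach_raiseBy {a : Fin m} {t : ℕ} {v : Vote m} (ht : t ≤ (v a : ℕ)) :
    Reach AdjSwapVote t v (raiseBy a t v) := by
  induction t generalizing v with
  | zero => rfl
  | succ t ih =>
    have h : 0 < (v a : ℕ) := by omega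
    exact ⟨raiseStep a v, adjSwapVote_raiseStep h,
      ih (by rw [raiseStep_apply_self h]; omega)⟩

end Raise

section RaiseVectors

variable {m n : ℕ}

lemma nAbove_add_nAbove (P : Profile m n) {x y : Fin m} (h : x ≠ y) :
    nAbove P x y + nAbove P y x = n := by
  have hiff : ∀ i, P i y < P i x ↔ ¬ P i x < P i y := fun i =>
    ⟨fun h₁ h₂ => h₁.not_gt h₂,
      fun h₁ => (Ne.lt_or_gt fun e => h ((P i).injective e)).resolve_left h₁⟩
  simp only [nAbove, hiff, card_filter_add_card_filter_not, card_univ, Fintype.card_fin]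

lemma nAbove_le_nAbove_add (P Q : Profile m n) (x y : Fin m) :
    nAbove P x y ≤ nAbove Q x y + #{i | P i x < P i y ∧ Q i y < Q i x} := by
  refine (card_le_card fun i hi => ?_).trans (card_union_le _ _)
  simp only [mem_filter, mem_univ, true_and, mem_union] at hi ⊢
  have hxy : x ≠ y := by rintro rfl; exact lt_irrefl _ hi
  exact (Ne.lt_or_gt fun e => hxy ((Q i).injective e)).imp id (⟨hi, ·⟩)

/-- The votes in which `b` is above `a` and raising `a` by `t i` positions lets it overtake `b`. -/
def passCount (P : Profile m n) (a : Fin m) (t : Fin n → ℕ) (b : Fin m) : ℕ :=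
  #{i | P i b < P i a ∧ (P i a : ℕ) ≤ P i b + t i}

/-- Each overtaking of `b` lowers `n_{ba} - n_{ab}` by two, so this says that raising `a` by
`t i` positions in each vote `i` makes it a Condorcet-tie winner. -/
def IsTieRaise (P : Profile m n) (a : Fin m) (t : Fin n → ℕ) : Prop :=
  ∀ b, b ≠ a → nAbove P b a ≤ nAbove P a b + 2 * passCount P a t b

lemma passCount_min_self (P : Profile m n) (a : Fin m) (t : Fin n → ℕ) (b : Fin m) :
    passCount P a (fun i => min (t i) (P i a)) b = passCount P a t b := by
  unfold passCount
  congr 1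
  ext i
  simp only [mem_filter, mem_univ, true_and]
  omega

lemma IsTieRaise.exists_reach {P : Profile m n} {a : Fin m} {t : Fin n → ℕ}
    (ht : IsTieRaise P a t) :
    ∃ Q, Reach AdjSwap (∑ i, min (t i) (P i a)) P Q ∧ CondorcetTieWinner Q a := by
  set Q : Profile m n := fun i => raiseBy a (min (t i) (P i a)) (P i)
  refine ⟨Q, reach_adjSwap_of_forall fun i => reach_raiseBy (min_le_right _ _), fun b hb => ?_⟩
  have hQ : ∀ i, Q i b < Q i a ↔ (P i b : ℕ) + min (t i) (P i a) < P i a :=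
    fun i => raiseBy_lt_raiseBy_iff hb (min_le_right _ _)
  have hsplit : nAbove P b a = passCount P a t b + nAbove Q b a := by
    rw [← passCount_min_self, passCount, nAbove, nAbove, ← card_union_of_disjoint,
      ← filter_or]
    · congr 1
      ext i
      simp only [mem_filter, mem_univ, true_and, hQ, Fin.lt_def]
      omega
    · exact disjoint_filter.2 fun i _ h => by rw [hQ]; omega
  have := ht b hb
  have := nAbove_add_nAbove P hb
  have := nAbove_add_nAbove Q hb
  rw [adv]
  omega

lemma scD_le_sum {P : Profile m n} {a : Fin m} {t : Fin n → ℕ} (ht : IsTieRaise P a t) :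
    ScD P a ≤ ∑ i, t i := by
  obtain ⟨Q, hPQ, hQ⟩ := ht.exists_reach
  have : ScD P a ≤ ∑ i, min (t i) (P i a) := Nat.sInf_le ⟨Q, hPQ, hQ⟩
  exact this.trans (sum_le_sum fun i _ => min_le_left _ _)

lemma isTieRaise_const (P : Profile m n) (a : Fin m) : IsTieRaise P a fun _ => m := by
  intro b _
  have : nAbove P b a ≤ passCount P a (fun _ => m) b :=
    card_le_card fun i hi => by
      simp only [mem_filter, mem_univ, true_and] at hi ⊢
      exact ⟨hi, by have := (P i a).isLt; omega⟩
  omega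

/-- A swap sequence making `a` a Condorcet-tie winner must, in each vote, carry `a` past
every alternative that ends up below it; raising `a` by the largest such distance is no more
costly, by `sub_le_kendallTau`. -/
lemma exists_isTieRaise_sum_le {N : ℕ} {P Q : Profile m n} {a : Fin m}
    (hPQ : Reach AdjSwap N P Q) (hQ : CondorcetTieWinner Q a) :
    ∃ t, (∀ i, t i < m) ∧ IsTieRaise P a t ∧ ∑ i, t i ≤ N := by
  set t : Fin n → ℕ := fun i =>
    ({c | P i c < P i a ∧ Q i a < Q i c} : Finset (Fin m)).sup fun c => (P i a : ℕ) - P i c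
  have hpass : ∀ i b, P i b < P i a → Q i a < Q i b → (P i a : ℕ) ≤ P i b + t i := by
    intro i b hP hQ
    have : (P i a : ℕ) - P i b ≤ t i :=
      le_sup (f := fun c => (P i a : ℕ) - P i c) (by simp [hP, hQ])
    omega
  refine ⟨t, fun i => ?_, fun b hb => ?_, ?_⟩
  · exact lt_of_le_of_lt (Finset.sup_le fun c _ => Nat.sub_le _ _) (P i a).isLt
  · have h₁ := nAbove_le_nAbove_add P Q b a
    have h₂ := nAbove_le_nAbove_add Q P a b
    have h₃ := hQ b hb
    have h₄ : #{i | P i b < P i a ∧ Q i a < Q i b} ≤ passCount P a t b :=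
      card_le_card fun i hi => by
        simp only [mem_filter, mem_univ, true_and] at hi ⊢
        exact ⟨hi.1, hpass i b hi.1 hi.2⟩
    have h₅ : #{i | Q i a < Q i b ∧ P i b < P i a} ≤ passCount P a t b :=
      card_le_card fun i hi => by
        simp only [mem_filter, mem_univ, true_and] at hi ⊢
        exact ⟨hi.2, hpass i b hi.2 hi.1⟩
    rw [adv] at h₃
    omega
  · refine le_trans (sum_le_sum fun i _ => ?_) (sum_kendallTau_le_of_reach hPQ)
    exact Finset.sup_le fun c hc => by
      simp only [mem_filter, mem_univ, true_and] at hc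
      exact sub_le_kendallTau hc.1 hc.2

lemma exists_isTieRaise_sum_le_scD (P : Profile m n) (a : Fin m) :
    ∃ t, (∀ i, t i < m) ∧ IsTieRaise P a t ∧ ∑ i, t i ≤ ScD P a := by
  obtain ⟨Q, hPQ, hQ⟩ := (isTieRaise_const P a).exists_reach
  obtain ⟨Q, hPQ, hQ⟩ := Nat.sInf_mem (⟨_, Q, hPQ, hQ⟩ :
    {k | ∃ Q, Reach AdjSwap k P Q ∧ CondorcetTieWinner Q a}.Nonempty)
  exact exists_isTieRaise_sum_le hPQ hQ

end RaiseVectors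

section Replicate

variable {m n : ℕ}

/-- `P^k`: every vote of `P` repeated `k` times. -/
def replicate (P : Profile m n) (k : ℕ) : Profile m (n * k) :=
  fun pos => P (finProdFinEquiv.symm pos).1

lemma sum_comp_fst_finProdFinEquiv_symm {M : Type*} [AddCommMonoid M] (k : ℕ) (g : Fin n → M) :
    ∑ pos : Fin (n * k), g (finProdFinEquiv.symm pos).1 = k • ∑ i, g i := by
  rw [← finProdFinEquiv.sum_comp, Fintype.sum_prod_type]
  simp only [Equiv.symm_apply_apply, sum_const, card_univ, Fintype.card_fin, smul_sum]

lemma card_filter_comp_fst_finProdFinEquiv_symm (k : ℕ) (p : Fin n → Prop) [DecidablePred p] :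
    #{pos : Fin (n * k) | p (finProdFinEquiv.symm pos).1} = k * #{i | p i} := by
  rw [card_filter, card_filter, ← smul_eq_mul (a := k)]
  exact sum_comp_fst_finProdFinEquiv_symm k fun i => if p i then 1 else 0

lemma nAbove_replicate (P : Profile m n) (k : ℕ) (x y : Fin m) :
    nAbove (replicate P k) x y = k * nAbove P x y :=
  card_filter_comp_fst_finProdFinEquiv_symm k fun i => P i x < P i y

lemma passCount_replicate (P : Profile m n) (k : ℕ) (a : Fin m) (t : Fin n → ℕ) (b : Fin m) :
    passCount (replicate P k) a (fun pos => t (finProdFinEquiv.symm pos).1) b =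
      k * passCount P a t b :=
  card_filter_comp_fst_finProdFinEquiv_symm k
    fun i => P i b < P i a ∧ (P i a : ℕ) ≤ P i b + t i

lemma IsTieRaise.replicate {P : Profile m n} {a : Fin m} {t : Fin n → ℕ} (ht : IsTieRaise P a t)
    (k : ℕ) : IsTieRaise (replicate P k) a fun pos => t (finProdFinEquiv.symm pos).1 := by
  intro b hb
  rw [nAbove_replicate, nAbove_replicate, passCount_replicate]
  have := Nat.mul_le_mul_left k (ht b hb)
  linarith

lemma scD_replicate_le (P : Profile m n) (k : ℕ) (a : Fin m) :
    ScD (replicate P k) a ≤ k * ScD P a := by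
  obtain ⟨t, -, ht, hsum⟩ := exists_isTieRaise_sum_le_scD P a
  calc ScD (replicate P k) a ≤ ∑ pos : Fin (n * k), t (finProdFinEquiv.symm pos).1 :=
        scD_le_sum (ht.replicate k)
    _ = k * ∑ i, t i := sum_comp_fst_finProdFinEquiv_symm k t
    _ ≤ k * ScD P a := Nat.mul_le_mul_left k hsum

end Replicate

section Rounding

lemma sum_card_filter_le_eq_sum {κ : Type*} (D : Finset κ) (T : κ → ℕ) {M : ℕ}
    (hT : ∀ x ∈ D, T x ≤ M) :
    ∑ r ∈ Icc 1 M, #{x ∈ D | r ≤ T x} = ∑ x ∈ D, T x := by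
  simp only [card_filter]
  rw [sum_comm]
  refine sum_congr rfl fun x hx => ?_
  rw [← card_filter, show {r ∈ Icc 1 M | r ≤ T x} = Icc 1 (T x) by
    ext r; simp only [mem_filter, mem_Icc]; have := hT x hx; omega]
  simp

lemma Finset.exists_card_filter_lt_eq {ι : Type*} (C : Finset ι) :
    ∃ rank : ι → ℕ, ∀ j ≤ #C, #{i ∈ C | rank i < j} = j := by
  classical
  set e := C.equivFin
  refine ⟨fun i => if h : i ∈ C then e ⟨i, h⟩ else 0, fun j hj => ?_⟩
  refine Eq.trans ?_ ((Fin.card_filter_val_lt (n := #C)).trans (min_eq_right hj))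
  refine card_bij (fun i hi => e ⟨i, (mem_filter.1 hi).1⟩) (fun i hi => ?_)
    (fun i hi i' hi' h => by simpa using e.injective h) (fun x hx => ?_)
  · obtain ⟨hiC, hi⟩ := mem_filter.1 hi
    simpa [hiC] using hi
  · refine ⟨e.symm x, mem_filter.2 ⟨(e.symm x).2, ?_⟩, by simp⟩
    simpa using hx

/-- `u` is the conjugate of the partition `d`. -/
lemma exists_le_card_filter_le {ι : Type*} (C : Finset ι) {d : ℕ → ℕ} {M : ℕ}
    (hd : Antitone d) (hdC : ∀ r, d r ≤ #C) (hdM : ∀ r, M < r → d r = 0) :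
    ∃ u : ι → ℕ, (∀ r, 0 < r → d r ≤ #{i ∈ C | r ≤ u i}) ∧
      ∑ i ∈ C, u i ≤ ∑ r ∈ Icc 1 M, d r := by
  obtain ⟨rank, hrank⟩ := C.exists_card_filter_lt_eq
  refine ⟨fun i => #{r ∈ Icc 1 M | rank i < d r}, fun r hr => ?_, ?_⟩
  · rcases Nat.eq_zero_or_pos (d r) with h0 | hpos
    · simp [h0]
    have hrM : r ≤ M := by
      by_contra h
      exact hpos.ne' (hdM r (by omega))
    calc d r = #{i ∈ C | rank i < d r} := (hrank _ (hdC r)).symm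
      _ ≤ _ := card_le_card fun i hi => by
        simp only [mem_filter] at hi ⊢
        refine ⟨hi.1, ?_⟩
        calc r = #(Icc 1 r) := by simp
          _ ≤ _ := card_le_card fun r' hr' => by
            simp only [mem_Icc, mem_filter] at hr' ⊢
            exact ⟨⟨hr'.1, hr'.2.trans hrM⟩, hi.2.trans_le (hd hr'.2)⟩
  · simp only [card_filter]
    rw [sum_comm]
    refine (sum_congr rfl fun r _ => ?_).le
    rw [← card_filter, hrank _ (hdC r)]

/-- Take `d r = ⌈#{x ∈ D | r ≤ T x} / k⌉` in `exists_le_card_filter_le`. -/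
lemma exists_levelwise_cover {ι κ : Type*} (C : Finset ι) (D : Finset κ) {k M : ℕ}
    (hk : 0 < k) (hD : #D ≤ k * #C) (T : κ → ℕ) (hT : ∀ x ∈ D, T x ≤ M) :
    ∃ u : ι → ℕ, (∀ r, 0 < r → #{x ∈ D | r ≤ T x} ≤ k * #{i ∈ C | r ≤ u i}) ∧
      k * ∑ i ∈ C, u i ≤ ∑ x ∈ D, T x + k * M := by
  set S : ℕ → ℕ := fun r => #{x ∈ D | r ≤ T x}
  have hS : Antitone S := fun r r' h =>
    card_le_card (monotone_filter_right _ fun x _ hx => h.trans hx)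
  have hceil : ∀ r,
      S r ≤ k * ((S r + k - 1) / k) ∧ k * ((S r + k - 1) / k) ≤ S r + k - 1 := by
    intro r
    have := Nat.div_add_mod (S r + k - 1) k
    have := Nat.mod_lt (S r + k - 1) hk
    omega
  have hSD : ∀ r, S r ≤ #D := fun r => card_filter_le _ _
  obtain ⟨u, hcover, hsum⟩ :=
    exists_le_card_filter_le C (d := fun r => (S r + k - 1) / k) (M := M)
      (fun r r' h => Nat.div_le_div_right (by have := hS h; omega))
      (fun r => Nat.lt_succ_iff.1 <| (Nat.div_lt_iff_lt_mul hk).2 (by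
        have := hSD r
        rw [Nat.succ_mul, mul_comm]
        omega))
      (fun r hr => by
        have : S r = 0 := card_eq_zero.2 <| filter_eq_empty_iff.2 fun x hx => by
          have := hT x hx
          omega
        simp only [this, zero_add]
        exact Nat.div_eq_of_lt (by omega))
  refine ⟨u, fun r hr => (hceil r).1.trans (Nat.mul_le_mul_left k (hcover r hr)), ?_⟩
  calc k * ∑ i ∈ C, u i ≤ ∑ r ∈ Icc 1 M, k * ((S r + k - 1) / k) := by
        rw [← mul_sum]; exact Nat.mul_le_mul_left k hsum
    _ ≤ ∑ r ∈ Icc 1 M, (S r + k) := sum_le_sum fun r _ => (hceil r).2.trans (by omega)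
    _ = ∑ x ∈ D, T x + k * M := by
        rw [sum_add_distrib, sum_card_filter_le_eq_sum D T hT]
        simp [mul_comm]

end Rounding

section GapClasses

variable {m n : ℕ}

def gapAbove (a : Fin m) (v : Vote m) (b : Fin m) : ℕ :=
  if v b < v a then v a - v b else 0

lemma passCount_eq_sum_fiberwise {N : ℕ} (Q : Profile m N) (a : Fin m) (t : Fin N → ℕ)
    (b : Fin m) (K : Finset (Fin m → ℕ)) (hK : ∀ x, gapAbove a (Q x) ∈ K) :
    passCount Q a t b =
      ∑ κ ∈ K, #{x | gapAbove a (Q x) = κ ∧ 0 < κ b ∧ κ b ≤ t x} := by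
  rw [passCount, card_eq_sum_card_fiberwise fun x _ => hK x]
  refine sum_congr rfl fun κ _ => ?_
  rw [filter_filter]
  congr 1
  ext x
  simp only [mem_filter, mem_univ, true_and]
  constructor
  · rintro ⟨⟨hlt, hle⟩, rfl⟩
    simp only [gapAbove, if_pos hlt, true_and]
    rw [Fin.lt_def] at hlt
    omega
  · rintro ⟨rfl, hpos, hle⟩
    unfold gapAbove at hpos hle
    split_ifs at hpos hle with hlt
    · exact ⟨⟨hlt, by omega⟩, rfl⟩
    · simp at hpos

/-- The alternatives above `a`, listed from the top; the index is the position of `a`. -/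
abbrev Stack (m : ℕ) (a : Fin m) := Σ j : Fin m, Fin j ↪ {b : Fin m // b ≠ a}

def stackOf (a : Fin m) (v : Vote m) : Stack m a :=
  ⟨v a, ⟨fun p => ⟨v.symm ⟨p, p.isLt.trans (v a).isLt⟩, fun h => by
      have := congrArg (Fin.val ∘ v) h
      simp only [Function.comp_apply, Equiv.apply_symm_apply] at this
      exact p.isLt.ne this⟩,
    fun p p' h => by simpa [Fin.ext_iff] using h⟩⟩

def Stack.gap {a : Fin m} (σ : Stack m a) (b : Fin m) : ℕ :=
  ∑ p : Fin σ.1, if (σ.2 p).1 = b then σ.1 - p else 0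

lemma Stack.gap_stackOf (a : Fin m) (v : Vote m) : (stackOf a v).gap = gapAbove a v := by
  funext b
  have hb : ∀ p : Fin (v a), v.symm ⟨p, p.isLt.trans (v a).isLt⟩ = b ↔ (p : ℕ) = v b :=
    fun p => by rw [Equiv.symm_apply_eq, Fin.ext_iff]
  show (∑ p : Fin (v a),
      if v.symm ⟨p, p.isLt.trans (v a).isLt⟩ = b then (v a : ℕ) - p else 0) = gapAbove a v b
  simp only [hb, gapAbove]
  split_ifs with hlt
  · rw [sum_eq_single_of_mem ⟨v b, hlt⟩ (mem_univ _)
      fun p _ hp => if_neg fun h => hp (Fin.ext h)]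
    simp
  · exact sum_eq_zero fun p _ =>
      if_neg fun (h : (p : ℕ) = v b) => hlt (Fin.lt_def.2 (h ▸ p.isLt))

lemma card_stack (a : Fin m) :
    Fintype.card (Stack m a) = ∑ j ∈ range m, (m - 1).descFactorial j := by
  rw [Fintype.card_sigma, ← Fin.sum_univ_eq_sum_range]
  refine sum_congr rfl fun j _ => ?_
  rw [Fintype.card_embedding_eq, Fintype.card_fin, Fintype.card_subtype_compl,
    Fintype.card_fin, Fintype.card_unique]

def gapClasses (P : Profile m n) (a : Fin m) : Finset (Fin m → ℕ) :=
  univ.image fun i => gapAbove a (P i)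

lemma card_gapClasses_le (P : Profile m n) (a : Fin m) :
    #(gapClasses P a) ≤ ∑ j ∈ range m, (m - 1).descFactorial j := by
  rw [← card_stack a]
  calc #(gapClasses P a)
      ≤ #(univ.image (Stack.gap : Stack m a → Fin m → ℕ)) :=
        card_le_card (image_subset_iff.2 fun i _ => mem_image.2 ⟨stackOf a (P i), mem_univ _,
          Stack.gap_stackOf a (P i)⟩)
    _ ≤ Fintype.card (Stack m a) := card_image_le

lemma sum_descFactorial_lt (N : ℕ) :
    (∑ j ∈ range (N + 1), N.descFactorial j : ℝ) < N.factorial * Real.exp 1 := by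
  have hterm : ∀ j ∈ range (N + 1),
      (N.descFactorial j : ℝ) = N.factorial * (1 / (N + 1 - 1 - j).factorial) := by
    intro j hj
    have := Nat.factorial_mul_descFactorial (Nat.lt_succ_iff.1 (mem_range.1 hj))
    rw [Nat.add_sub_cancel, ← this]
    push_cast
    field_simp
  rw [sum_congr rfl hterm, ← mul_sum,
    sum_range_reflect (fun j => 1 / (j.factorial : ℝ)) (N + 1)]
  refine mul_lt_mul_of_pos_left ?_ (by positivity)
  have he := Real.sum_le_exp_of_nonneg zero_le_one (N + 2)
  simp only [one_pow, sum_range_succ _ (N + 1)] at he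
  have : (0 : ℝ) < 1 / (N + 1).factorial := by positivity
  linarith

end GapClasses

section Cloning

variable {m n : ℕ} (P : Profile m n) (a : Fin m) {k : ℕ}

lemma passCount_replicate_le {T : Fin (n * k) → ℕ} {u : (Fin m → ℕ) → Fin n → ℕ}
    (hu : ∀ κ r, 0 < r →
      #{pos ∈ {pos | gapAbove a (P (finProdFinEquiv.symm pos).1) = κ} | r ≤ T pos} ≤
        k * #{i ∈ {i | gapAbove a (P i) = κ} | r ≤ u κ i}) (b : Fin m) :
    passCount (replicate P k) a T b ≤ k * passCount P a (fun i => u (gapAbove a (P i)) i) b := by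
  have hK : ∀ i, gapAbove a (P i) ∈ gapClasses P a := fun i => mem_image_of_mem _ (mem_univ i)
  rw [passCount_eq_sum_fiberwise (replicate P k) a T b _ fun pos => hK _,
    passCount_eq_sum_fiberwise P a _ b _ hK, mul_sum]
  refine sum_le_sum fun κ _ => ?_
  rcases Nat.eq_zero_or_pos (κ b) with h0 | hpos
  · simp [h0]
  calc #{pos | gapAbove a (replicate P k pos) = κ ∧ 0 < κ b ∧ κ b ≤ T pos}
      = #{pos ∈ {pos | gapAbove a (P (finProdFinEquiv.symm pos).1) = κ} | κ b ≤ T pos} := by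
        simp only [filter_filter, hpos, true_and]
        rfl
    _ ≤ k * #{i ∈ {i | gapAbove a (P i) = κ} | κ b ≤ u κ i} := hu κ (κ b) hpos
    _ = k * #{i | gapAbove a (P i) = κ ∧ 0 < κ b ∧ κ b ≤ u (gapAbove a (P i)) i} := by
        simp only [filter_filter, hpos, true_and]
        congr 2
        exact filter_congr fun i _ => and_congr_right fun h => by rw [h]

lemma mul_sum_le_add_mul_card_gapClasses {T : Fin (n * k) → ℕ}
    {u : (Fin m → ℕ) → Fin n → ℕ} {c : ℕ}
    (hu : ∀ κ, k * ∑ i ∈ {i | gapAbove a (P i) = κ}, u κ i ≤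
      ∑ pos ∈ {pos | gapAbove a (P (finProdFinEquiv.symm pos).1) = κ}, T pos + c) :
    k * ∑ i, u (gapAbove a (P i)) i ≤ ∑ pos, T pos + c * #(gapClasses P a) := by
  have hK : ∀ i, gapAbove a (P i) ∈ gapClasses P a := fun i => mem_image_of_mem _ (mem_univ i)
  calc k * ∑ i, u (gapAbove a (P i)) i
      = ∑ κ ∈ gapClasses P a, k * ∑ i ∈ {i | gapAbove a (P i) = κ}, u κ i := by
        rw [← sum_fiberwise_of_maps_to fun i _ => hK i, mul_sum]
        refine sum_congr rfl fun κ _ => congrArg (k * ·) (sum_congr rfl fun i hi => ?_)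
        rw [(mem_filter.1 hi).2]
    _ ≤ ∑ κ ∈ gapClasses P a,
          (∑ pos ∈ {pos | gapAbove a (P (finProdFinEquiv.symm pos).1) = κ}, T pos + c) :=
        sum_le_sum fun κ _ => hu κ
    _ = ∑ pos, T pos + c * #(gapClasses P a) := by
        rw [sum_add_distrib, sum_fiberwise_of_maps_to fun pos _ => hK _, sum_const, smul_eq_mul,
          mul_comm c]

lemma exists_isTieRaise_of_replicate (hk : 0 < k) {T : Fin (n * k) → ℕ}
    (hTm : ∀ pos, T pos < m) (hT : IsTieRaise (replicate P k) a T) :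
    ∃ t, IsTieRaise P a t ∧
      k * ∑ i, t i ≤ ∑ pos, T pos + k * (m - 1) * #(gapClasses P a) := by
  choose u hu hcost using fun κ : Fin m → ℕ =>
    exists_levelwise_cover {i | gapAbove a (P i) = κ}
      {pos | gapAbove a (P (finProdFinEquiv.symm pos).1) = κ} hk
      (card_filter_comp_fst_finProdFinEquiv_symm k fun i => gapAbove a (P i) = κ).le T
      fun pos _ => Nat.le_sub_one_of_lt (hTm pos)
  refine ⟨fun i => u (gapAbove a (P i)) i, fun b hb => ?_,
    mul_sum_le_add_mul_card_gapClasses P a hcost⟩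
  have h := hT b hb
  rw [nAbove_replicate, nAbove_replicate] at h
  have hpass := passCount_replicate_le P a hu b
  refine Nat.le_of_mul_le_mul_left ?_ hk
  linarith

theorem scD_lt_scD_replicate_add (hk : 0 < k) (hm : 2 ≤ m) :
    ((k * ScD P a : ℕ) : ℝ) <
      (ScD (replicate P k) a : ℝ) +
        (k : ℝ) * Nat.factorial (m - 1) * ((m : ℝ) - 1) * Real.exp 1 := by
  obtain ⟨T, hTm, hT, hsum⟩ := exists_isTieRaise_sum_le_scD (replicate P k) a
  obtain ⟨t, ht, hcost⟩ := exists_isTieRaise_of_replicate P a hk hTm hT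
  have hscD : k * ScD P a ≤ ScD (replicate P k) a + k * (m - 1) * #(gapClasses P a) :=
    (Nat.mul_le_mul_left k (scD_le_sum ht)).trans (hcost.trans (by gcongr))
  have hK : (#(gapClasses P a) : ℝ) < (m - 1).factorial * Real.exp 1 := by
    have := sum_descFactorial_lt (m - 1)
    rw [Nat.sub_add_cancel (by omega : 1 ≤ m)] at this
    exact lt_of_le_of_lt (by exact_mod_cast card_gapClasses_le P a) this
  have hkm : (0 : ℝ) < k * ((m : ℝ) - 1) :=
    mul_pos (by exact_mod_cast hk) (by linarith [show (2 : ℝ) ≤ m by exact_mod_cast hm])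
  calc ((k * ScD P a : ℕ) : ℝ)
    _ ≤ ScD (replicate P k) a + k * ((m : ℝ) - 1) * #(gapClasses P a) := by
      have := (Nat.cast_le (α := ℝ)).2 hscD
      push_cast [Nat.cast_sub (by omega : 1 ≤ m)] at this ⊢
      exact this
    _ < ScD (replicate P k) a + k * ((m : ℝ) - 1) * ((m - 1).factorial * Real.exp 1) := by gcongr
    _ = _ := by ring

end Cloning

/-- Cloning bound for the Dodgson score: if `P^k` is the profile in which every
vote of `P` is repeated `k` times, then
`Sc_D[P^k](a) ≤ k·Sc_D[P](a) < Sc_D[P^k](a) + k·(m−1)!·(m−1)·e`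
(equivalently, the `k`-Dodgson score `Sc_D[P^k](a)/k` lies in the interval
`(Sc_D[P](a) − (m−1)!(m−1)e, Sc_D[P](a)]`). -/
theorem stmt_17 {m n : ℕ} (hm : 2 ≤ m) (P : Profile m n) (a : Fin m)
    (k : ℕ) (hk : 1 ≤ k) :
    ScD (fun i : Fin (n * k) => P ((finProdFinEquiv.symm i).1)) a ≤ k * ScD P a ∧
    ((k * ScD P a : ℕ) : ℝ) <
      (ScD (fun i : Fin (n * k) => P ((finProdFinEquiv.symm i).1)) a : ℝ) +
        (k : ℝ) * Nat.factorial (m - 1) * ((m : ℝ) - 1) * Real.exp 1 :=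
  ⟨scD_replicate_le P k a, scD_lt_scD_replicate_add P a hk hm⟩
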